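/- arXiv:2505.17025 — 5 statements merged into one kernel-verified Lean document; each statement's English description precedes it below -/
import Mathlib

section
/- The solitary wave satisfies the Serre (Green–Naghdi, flat-bottom) momentum equation: for all x, t ∈ ℝ, ∂_t u + u·∂_x u + g·∂_x h = (1/(3h))·∂_x[ h³·( ∂_x∂_t u + u·∂_x² u − (∂_x u)² ) ], where h = h(x,t) and u = u(x,t) are the solitary wave fields. -/
/-!
With `ξ = K (x - c t - x₀)` both fields are travelling waves, and `u = c η / (d + η)` is
`u = c - c d / h`: in the frame moving with the wave the mass flux `h (u - c) = -c d` is constant.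
For a travelling wave of constant flux `m` the Serre momentum equation collapses to the
third-order ODE `H' (g - m² / H³) = -(K² m² / (3 H)) (H''' - 2 H' H'' / H + H'³ / H²)` for the
depth profile `H`.
For `H = d + a sech²` every derivative is a polynomial in `sech²`, times `(sech²)'` for the odd
ones, so after `c² = g (d + a)` and `K² = 3a / (4d²(d + a))` the ODE reduces to the first integral
`((sech²)')² = 4 sech⁴ (1 - sech²)`.
-/

open Real

noncomputable def sechSq (ξ : ℝ) : ℝ := (cosh ξ ^ 2)⁻¹

noncomputable def sechSqDeriv (ξ : ℝ) : ℝ := -2 * sinh ξ / cosh ξ ^ 3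

theorem sechSq_pos (ξ : ℝ) : 0 < sechSq ξ := by
  unfold sechSq; positivity

theorem hasDerivAt_sechSq (ξ : ℝ) : HasDerivAt sechSq (sechSqDeriv ξ) ξ := by
  have hcosh := cosh_pos ξ
  refine (((hasDerivAt_cosh ξ).fun_pow 2).inv (pow_pos hcosh 2).ne').congr_deriv ?_
  unfold sechSqDeriv
  field_simp
  push_cast
  ring

theorem hasDerivAt_sechSqDeriv (ξ : ℝ) :
    HasDerivAt sechSqDeriv (4 * sechSq ξ - 6 * sechSq ξ ^ 2) ξ := by
  have hcosh := cosh_pos ξ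
  refine (((hasDerivAt_sinh ξ).const_mul (-2)).div ((hasDerivAt_cosh ξ).fun_pow 3)
    (pow_pos hcosh 3).ne').congr_deriv ?_
  unfold sechSq
  field_simp
  push_cast
  linear_combination (-6 * cosh ξ ^ 2) * cosh_sq ξ

theorem hasDerivAt_sechSq_second_deriv (ξ : ℝ) :
    HasDerivAt (fun ξ => 4 * sechSq ξ - 6 * sechSq ξ ^ 2)
      ((4 - 12 * sechSq ξ) * sechSqDeriv ξ) ξ := by
  refine (((hasDerivAt_sechSq ξ).const_mul 4).fun_sub
    (((hasDerivAt_sechSq ξ).fun_pow 2).const_mul 6)).congr_deriv ?_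
  push_cast
  ring

theorem sechSqDeriv_sq (ξ : ℝ) : sechSqDeriv ξ ^ 2 = 4 * sechSq ξ ^ 2 * (1 - sechSq ξ) := by
  have hcosh := cosh_pos ξ
  unfold sechSq sechSqDeriv
  field_simp
  linear_combination (-4) * cosh_sq ξ

def travellingWave (φ : ℝ → ℝ) (K c x₀ x t : ℝ) : ℝ := φ (K * (x - c * t - x₀))

section TravellingWave

variable {φ : ℝ → ℝ} (K c x₀ : ℝ)

theorem deriv_travellingWave_space (hφ : Differentiable ℝ φ) (t : ℝ) :
    deriv (fun y => travellingWave φ K c x₀ y t) =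
      fun y => K * travellingWave (deriv φ) K c x₀ y t := by
  funext y
  have hξ : HasDerivAt (fun y => K * (y - c * t - x₀)) K y := by
    simpa using (((hasDerivAt_id y).sub_const (c * t)).sub_const x₀).const_mul K
  rw [mul_comm]
  exact ((hφ _).hasDerivAt.comp y hξ).deriv

theorem deriv_travellingWave_time (hφ : Differentiable ℝ φ) (x : ℝ) :
    deriv (fun s => travellingWave φ K c x₀ x s) =
      fun s => -(K * c) * travellingWave (deriv φ) K c x₀ x s := by
  funext s
  have hξ : HasDerivAt (fun s => K * (x - c * s - x₀)) (-(K * c)) s := by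
    simpa using ((((hasDerivAt_id s).const_mul c).const_sub x).sub_const x₀).const_mul K
  rw [mul_comm]
  exact ((hφ _).hasDerivAt.comp s hξ).deriv

end TravellingWave

def SerreMomentumEq (g : ℝ) (u h : ℝ → ℝ → ℝ) (x t : ℝ) : Prop :=
  deriv (fun s => u x s) t + u x t * deriv (fun y => u y t) x + g * deriv (fun y => h y t) x
    = (1 / (3 * h x t)) *
        deriv (fun y => (h y t) ^ 3 *
          (deriv (fun z => deriv (fun s => u z s) t) y
            + u y t * deriv (deriv (fun z => u z t)) y
            - (deriv (fun z => u z t) y) ^ 2)) x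

/-- For `u = U (K (x - c t - x₀))` and `h = H (K (x - c t - x₀))`, the dispersive flux
`h³ (u_xt + u u_xx - u_x²)` is `K²` times this profile evaluated at `K (x - c t - x₀)`. -/
noncomputable def dispersiveFluxProfile (c : ℝ) (U H : ℝ → ℝ) (ζ : ℝ) : ℝ :=
  H ζ ^ 3 * ((U ζ - c) * deriv (deriv U) ζ - deriv U ζ ^ 2)

theorem serreMomentumEq_travellingWave {U H : ℝ → ℝ} {g K c x₀ x t : ℝ}
    (hU : Differentiable ℝ U) (hU' : Differentiable ℝ (deriv U)) (hH : Differentiable ℝ H)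
    (hG : Differentiable ℝ (dispersiveFluxProfile c U H))
    (hode : (U (K * (x - c * t - x₀)) - c) * deriv U (K * (x - c * t - x₀))
        + g * deriv H (K * (x - c * t - x₀))
      = K ^ 2 / (3 * H (K * (x - c * t - x₀)))
          * deriv (dispersiveFluxProfile c U H) (K * (x - c * t - x₀))) :
    SerreMomentumEq g (travellingWave U K c x₀) (travellingWave H K c x₀) x t := by
  have hflux : (fun y => travellingWave H K c x₀ y t ^ 3 *
        (deriv (fun z => deriv (fun s => travellingWave U K c x₀ z s) t) y
          + travellingWave U K c x₀ y t * deriv (deriv (fun z => travellingWave U K c x₀ z t)) y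
          - deriv (fun z => travellingWave U K c x₀ z t) y ^ 2))
      = fun y => K ^ 2 * travellingWave (dispersiveFluxProfile c U H) K c x₀ y t := by
    funext y
    simp only [deriv_travellingWave_time K c x₀ hU, deriv_travellingWave_space K c x₀ hU,
      deriv_const_mul_field', deriv_travellingWave_space K c x₀ hU']
    simp only [travellingWave, dispersiveFluxProfile]
    ring
  rw [SerreMomentumEq, hflux, deriv_const_mul_field', deriv_travellingWave_space K c x₀ hG,
    deriv_travellingWave_time K c x₀ hU, deriv_travellingWave_space K c x₀ hU,
    deriv_travellingWave_space K c x₀ hH]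
  simp only [travellingWave]
  linear_combination K * hode

section ConstantFlux

variable {H H₁ H₂ H₃ : ℝ → ℝ} (c m : ℝ)

theorem hasDerivAt_const_sub_div {ζ : ℝ} (hH : HasDerivAt H (H₁ ζ) ζ) (h0 : H ζ ≠ 0) :
    HasDerivAt (fun ζ => c - m / H ζ) (m * H₁ ζ / H ζ ^ 2) ζ := by
  refine (((hasDerivAt_const ζ m).div hH h0).const_sub c).congr_deriv ?_
  ring

theorem deriv_const_sub_div (hH : ∀ ζ, HasDerivAt H (H₁ ζ) ζ) (h0 : ∀ ζ, H ζ ≠ 0) :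
    deriv (fun ζ => c - m / H ζ) = fun ζ => m * H₁ ζ / H ζ ^ 2 :=
  funext fun ζ => (hasDerivAt_const_sub_div c m (hH ζ) (h0 ζ)).deriv

theorem hasDerivAt_deriv_const_sub_div (hH : ∀ ζ, HasDerivAt H (H₁ ζ) ζ)
    (hH₁ : ∀ ζ, HasDerivAt H₁ (H₂ ζ) ζ) (h0 : ∀ ζ, H ζ ≠ 0) (ζ : ℝ) :
    HasDerivAt (deriv (fun ζ => c - m / H ζ))
      (m * (H₂ ζ / H ζ ^ 2 - 2 * H₁ ζ ^ 2 / H ζ ^ 3)) ζ := by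
  rw [deriv_const_sub_div c m hH h0]
  have hHζ := h0 ζ
  refine (((hH₁ ζ).const_mul m).div ((hH ζ).fun_pow 2) (pow_ne_zero 2 hHζ)).congr_deriv ?_
  field_simp
  push_cast
  ring

theorem dispersiveFluxProfile_const_sub_div (hH : ∀ ζ, HasDerivAt H (H₁ ζ) ζ)
    (hH₁ : ∀ ζ, HasDerivAt H₁ (H₂ ζ) ζ) (h0 : ∀ ζ, H ζ ≠ 0) :
    dispersiveFluxProfile c (fun ζ => c - m / H ζ) H =
      fun ζ => -m ^ 2 * (H₂ ζ - H₁ ζ ^ 2 / H ζ) := by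
  funext ζ
  have hHζ := h0 ζ
  rw [dispersiveFluxProfile, (hasDerivAt_deriv_const_sub_div c m hH hH₁ h0 ζ).deriv,
    deriv_const_sub_div c m hH h0]
  field_simp
  ring

theorem hasDerivAt_dispersiveFluxProfile_const_sub_div (hH : ∀ ζ, HasDerivAt H (H₁ ζ) ζ)
    (hH₁ : ∀ ζ, HasDerivAt H₁ (H₂ ζ) ζ) (hH₂ : ∀ ζ, HasDerivAt H₂ (H₃ ζ) ζ)
    (h0 : ∀ ζ, H ζ ≠ 0) (ζ : ℝ) :
    HasDerivAt (dispersiveFluxProfile c (fun ζ => c - m / H ζ) H)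
      (-m ^ 2 * (H₃ ζ - 2 * H₁ ζ * H₂ ζ / H ζ + H₁ ζ ^ 3 / H ζ ^ 2)) ζ := by
  rw [dispersiveFluxProfile_const_sub_div c m hH hH₁ h0]
  have hHζ := h0 ζ
  refine (((hH₂ ζ).fun_sub (((hH₁ ζ).fun_pow 2).div (hH ζ) hHζ)).const_mul _).congr_deriv ?_
  field_simp
  push_cast
  ring

theorem serreMomentumEq_travellingWave_const_sub_div {g K x₀ : ℝ}
    (hH : ∀ ζ, HasDerivAt H (H₁ ζ) ζ) (hH₁ : ∀ ζ, HasDerivAt H₁ (H₂ ζ) ζ)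
    (hH₂ : ∀ ζ, HasDerivAt H₂ (H₃ ζ) ζ) (h0 : ∀ ζ, H ζ ≠ 0)
    (hode : ∀ ξ, H₁ ξ * (g - m ^ 2 / H ξ ^ 3)
        = -(K ^ 2 * m ^ 2 / (3 * H ξ)) * (H₃ ξ - 2 * H₁ ξ * H₂ ξ / H ξ + H₁ ξ ^ 3 / H ξ ^ 2))
    (x t : ℝ) :
    SerreMomentumEq g (travellingWave (fun ζ => c - m / H ζ) K c x₀) (travellingWave H K c x₀)
      x t := by
  have hU : ∀ ζ, HasDerivAt (fun ζ => c - m / H ζ) (m * H₁ ζ / H ζ ^ 2) ζ :=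
    fun ζ => hasDerivAt_const_sub_div c m (hH ζ) (h0 ζ)
  have hG := hasDerivAt_dispersiveFluxProfile_const_sub_div c m hH hH₁ hH₂ h0
  refine serreMomentumEq_travellingWave (fun ζ => (hU ζ).differentiableAt)
    (fun ζ => (hasDerivAt_deriv_const_sub_div c m hH hH₁ h0 ζ).differentiableAt)
    (fun ζ => (hH ζ).differentiableAt) (fun ζ => (hG ζ).differentiableAt) ?_
  set ξ := K * (x - c * t - x₀)
  have hξ := h0 ξ
  have hodeξ := hode ξ
  rw [(hU ξ).deriv, (hG ξ).deriv, (hH ξ).deriv]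
  field_simp at hodeξ ⊢
  linear_combination hodeξ

end ConstantFlux

noncomputable def solitaryDepth (a d ξ : ℝ) : ℝ := d + a * sechSq ξ

theorem solitaryDepth_pos {a d : ℝ} (hd : 0 < d) (ha : 0 ≤ a) (ξ : ℝ) :
    0 < solitaryDepth a d ξ := by
  have hS := sechSq_pos ξ
  unfold solitaryDepth
  positivity

theorem hasDerivAt_solitaryDepth (a d ξ : ℝ) :
    HasDerivAt (solitaryDepth a d) (a * sechSqDeriv ξ) ξ :=
  ((hasDerivAt_sechSq ξ).const_mul a).const_add d

theorem solitaryDepth_serre_ode {a d g c K : ℝ} (hd : 0 < d) (ha : 0 < a)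
    (hc : c ^ 2 = g * (d + a)) (hK : K ^ 2 = 3 * a / (4 * d ^ 2 * (d + a))) (ξ : ℝ) :
    a * sechSqDeriv ξ * (g - (c * d) ^ 2 / solitaryDepth a d ξ ^ 3)
      = -(K ^ 2 * (c * d) ^ 2 / (3 * solitaryDepth a d ξ)) *
          (a * ((4 - 12 * sechSq ξ) * sechSqDeriv ξ)
            - 2 * (a * sechSqDeriv ξ) * (a * (4 * sechSq ξ - 6 * sechSq ξ ^ 2))
                / solitaryDepth a d ξ
            + (a * sechSqDeriv ξ) ^ 3 / solitaryDepth a d ξ ^ 2) := by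
  have hH := (solitaryDepth_pos hd ha.le ξ).ne'
  have hda : d + a ≠ 0 := by positivity
  rw [hK, mul_pow, hc]
  unfold solitaryDepth at hH ⊢
  field_simp
  linear_combination g * a ^ 3 * sechSqDeriv ξ * sechSqDeriv_sq ξ

/-- The solitary wave satisfies the Serre (Green–Naghdi, flat-bottom) momentum
equation:
`∂_t u + u ∂_x u + g ∂_x h = (1/(3h)) ∂_x [ h³ (∂_x∂_t u + u ∂_x² u − (∂_x u)²) ]`. -/
theorem solitary_wave_serre_momentum
    (g d a x₀ : ℝ) (hg : 0 < g) (hd : 0 < d) (ha : 0 < a)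
    (c K : ℝ)
    (hc : c = Real.sqrt (g * (d + a)))
    (hK : K = Real.sqrt (3 * a / (4 * d ^ 2 * (d + a))))
    (η h u : ℝ → ℝ → ℝ)
    (hη : ∀ x t, η x t = a / (Real.cosh (K * (x - c * t - x₀))) ^ 2)
    (hh : ∀ x t, h x t = d + η x t)
    (hu : ∀ x t, u x t = c * η x t / (d + η x t)) :
    ∀ x t : ℝ,
      deriv (fun s => u x s) t + u x t * deriv (fun y => u y t) x
          + g * deriv (fun y => h y t) x
        = (1 / (3 * h x t)) *
            deriv (fun y =>
              (h y t) ^ 3 *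
                (deriv (fun z => deriv (fun s => u z s) t) y
                  + u y t * deriv (deriv (fun z => u z t)) y
                  - (deriv (fun z => u z t) y) ^ 2)) x := by
  have hc2 : c ^ 2 = g * (d + a) := by rw [hc, sq_sqrt (by positivity)]
  have hK2 : K ^ 2 = 3 * a / (4 * d ^ 2 * (d + a)) := by rw [hK, sq_sqrt (by positivity)]
  have hH (ξ : ℝ) : solitaryDepth a d ξ ≠ 0 := (solitaryDepth_pos hd ha.le ξ).ne'
  have hh' : h = travellingWave (solitaryDepth a d) K c x₀ := by
    funext x t
    rw [hh, hη, travellingWave, solitaryDepth, sechSq, div_eq_mul_inv]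
  have hu' : u = travellingWave (fun ξ => c - c * d / solitaryDepth a d ξ) K c x₀ := by
    funext x t
    have hcosh := cosh_pos (K * (x - c * t - x₀))
    rw [hu, hη, travellingWave, solitaryDepth, sechSq]
    field_simp
    ring
  subst hh' hu'
  exact serreMomentumEq_travellingWave_const_sub_div c (c * d) (hasDerivAt_solitaryDepth a d)
    (fun ξ => (hasDerivAt_sechSqDeriv ξ).const_mul a)
    (fun ξ => (hasDerivAt_sechSq_second_deriv ξ).const_mul a) hH
    (solitaryDepth_serre_ode hd ha hc2 hK2)
end

section
/- The depth-averaged vertical velocity w(x,t) = −c·d·∂_x η(x,t) / (2·h(x,t)) together with the solitary wave fields satisfies the flat-bottom divergence constraint: for all x, t ∈ ℝ, 2·h·w + h·u·∂_x(2d − h) + 2·h·∂_t d = −h·∂_x(h·u), where the depth d is constant (so ∂_x(2d − h) = −∂_x h and ∂_t d = 0). -/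
/-- The depth-averaged vertical velocity `w = −c d ∂_x η / (2 h)` together with
the solitary wave fields satisfies the flat-bottom divergence constraint:
`2 h w + h u ∂_x(2d − h) + 2 h ∂_t d = −h ∂_x(h u)`, where the depth `d` is
constant. -/
theorem solitary_wave_divergence_constraint
    (g d a x₀ : ℝ) (hg : 0 < g) (hd : 0 < d) (ha : 0 < a)
    (c K : ℝ)
    (hc : c = Real.sqrt (g * (d + a)))
    (hK : K = Real.sqrt (3 * a / (4 * d ^ 2 * (d + a))))
    (η h u w : ℝ → ℝ → ℝ)
    (hη : ∀ x t, η x t = a / (Real.cosh (K * (x - c * t - x₀))) ^ 2)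
    (hh : ∀ x t, h x t = d + η x t)
    (hu : ∀ x t, u x t = c * η x t / (d + η x t))
    (hw : ∀ x t, w x t = -c * d * deriv (fun y => η y t) x / (2 * h x t)) :
    ∀ x t : ℝ,
      2 * h x t * w x t
          + h x t * u x t * deriv (fun y => 2 * d - h y t) x
          + 2 * h x t * deriv (fun _ : ℝ => d) t
        = -(h x t) * deriv (fun y => h y t * u y t) x := by
  intro x t
  have hpos : ∀ y, 0 < d + η y t := by
    intro y
    rw [hη]
    have := Real.cosh_pos (K * (y - c * t - x₀))
    positivity
  have hdiff : Differentiable ℝ (fun y => η y t) := by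
    have : (fun y => η y t) = fun y =>
        a / (Real.cosh (K * (y - c * t - x₀))) ^ 2 := by
      funext y; rw [hη]
    rw [this]
    apply Differentiable.div (differentiable_const a)
    · exact (Real.differentiable_cosh.comp (by fun_prop)).pow 2
    · intro y
      exact pow_ne_zero 2 (ne_of_gt (Real.cosh_pos _))
  have hhx : h x t = d + η x t := hh x t
  have hhne : h x t ≠ 0 := by rw [hhx]; exact ne_of_gt (hpos x)
  have key1 : deriv (fun y => 2 * d - h y t) x = -deriv (fun y => η y t) x := by
    have : (fun y => 2 * d - h y t) = fun y => (2 * d) - (d + η y t) := by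
      funext y; rw [hh]
    rw [this]
    rw [deriv_const_sub]
    rw [deriv_const_add]
  have key2 : deriv (fun y => h y t * u y t) x = c * deriv (fun y => η y t) x := by
    have : (fun y => h y t * u y t) = fun y => c * η y t := by
      funext y
      rw [hh, hu]
      field_simp [ne_of_gt (hpos y)]
    rw [this, deriv_const_mul _ (hdiff x)]
  have key3 : deriv (fun _ : ℝ => d) t = 0 := deriv_const t d
  rw [key1, key2, key3, hw, hu, hhx]
  set e := η x t
  set D := deriv (fun y => η y t) x
  have hne : d + e ≠ 0 := ne_of_gt (hpos x)
  field_simp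
  ring
end

section
/- Elimination of the pressure gradient from the bottom pressure: if the horizontal momentum correction equation (hu − h̃u)/Δt = −(1/ρ)·(h̃·p)_x + (d_x/ρ)·[ 6/(4+d_x²)·p + d_x/(4+d_x²)·(h̃·p)_x + φ ] holds at a point x, then the bottom non-hydrostatic pressure P := 6/(4+d_x²)·p + d_x/(4+d_x²)·(h̃·p)_x + φ satisfies P = (3/2)·p + ((4+d_x²)/4)·φ − (ρ·d_x/(4·Δt))·(hu − h̃u) at that point. -/
/-! Solving the momentum correction equation for the gradient gives `(h̃p)_x = d_x P − ρ (hu − h̃u)/Δt`.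
Substituted into `(4 + d_x²) P = 6 p + d_x (h̃p)_x + (4 + d_x²) φ`, the `d_x² P` terms cancel,
leaving `4 P = 6 p + (4 + d_x²) φ − ρ d_x (hu − h̃u)/Δt`. -/

section

variable {K : Type*} [Field K]

/-- `a` plays the role of `d_x` and `G` that of `(h̃p)_x`. -/
def bottomPressure (a p G φ : K) : K :=
  6 / (4 + a ^ 2) * p + a / (4 + a ^ 2) * G + φ

theorem gradient_eq_of_momentum_correction {ρ Δt M a p G φ : K} (hρ : ρ ≠ 0)
    (hcorr : M / Δt = -(1 / ρ) * G + (a / ρ) * bottomPressure a p G φ) :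
    G = a * bottomPressure a p G φ - ρ * (M / Δt) := by
  rw [hcorr]
  field_simp
  ring

variable [LinearOrder K] [IsStrictOrderedRing K]

theorem mul_bottomPressure (a p G φ : K) :
    (4 + a ^ 2) * bottomPressure a p G φ = 6 * p + a * G + (4 + a ^ 2) * φ := by
  have hc : (4 : K) + a ^ 2 ≠ 0 := by positivity
  unfold bottomPressure
  field_simp

theorem bottomPressure_eq_of_momentum_correction {ρ Δt M a p G φ : K} (hρ : ρ ≠ 0)
    (hcorr : M / Δt = -(1 / ρ) * G + (a / ρ) * bottomPressure a p G φ) :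
    bottomPressure a p G φ = 3 / 2 * p + (4 + a ^ 2) / 4 * φ - ρ * a / (4 * Δt) * M := by
  have hG := gradient_eq_of_momentum_correction hρ hcorr
  have hP := mul_bottomPressure a p G φ
  linear_combination hP / 4 + a / 4 * hG

end

theorem bottom_pressure_elimination_general
    (ρ Δt : ℝ) (hρ : 0 < ρ)
    (d htil htu hu p φ : ℝ → ℝ)
    (x : ℝ)
    (hcorr : (hu x - htu x) / Δt
        = -(1 / ρ) * deriv (fun y => htil y * p y) x
          + (deriv d x / ρ) *
              (6 / (4 + (deriv d x) ^ 2) * p x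
                + deriv d x / (4 + (deriv d x) ^ 2)
                    * deriv (fun y => htil y * p y) x
                + φ x)) :
    6 / (4 + (deriv d x) ^ 2) * p x
        + deriv d x / (4 + (deriv d x) ^ 2) * deriv (fun y => htil y * p y) x
        + φ x
      = (3 / 2) * p x + ((4 + (deriv d x) ^ 2) / 4) * φ x
          - (ρ * deriv d x / (4 * Δt)) * (hu x - htu x) :=
  bottomPressure_eq_of_momentum_correction hρ.ne' hcorr

/-- Elimination of the pressure gradient from the bottom pressure: if the
horizontal momentum correction equation holds at a point `x`, then the bottom
non-hydrostatic pressure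
`P := 6/(4+d_x²)·p + d_x/(4+d_x²)·(h̃ p)_x + φ` satisfies
`P = (3/2) p + ((4+d_x²)/4) φ − (ρ d_x/(4 Δt)) (hu − h̃u)` at that point. -/
theorem bottom_pressure_elimination
    (ρ Δt : ℝ) (hρ : 0 < ρ) (hΔt : 0 < Δt)
    (d htil htu hu p φ : ℝ → ℝ)
    (hd : Differentiable ℝ d)
    (hhtil : Differentiable ℝ htil)
    (hhtu : Differentiable ℝ htu)
    (hhu : Differentiable ℝ hu)
    (hp : Differentiable ℝ p)
    (hφ : Differentiable ℝ φ)
    (hpos : ∀ x, 0 < htil x)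
    (x : ℝ)
    (hcorr : (hu x - htu x) / Δt
        = -(1 / ρ) * deriv (fun y => htil y * p y) x
          + (deriv d x / ρ) *
              (6 / (4 + (deriv d x) ^ 2) * p x
                + deriv d x / (4 + (deriv d x) ^ 2)
                    * deriv (fun y => htil y * p y) x
                + φ x)) :
    6 / (4 + (deriv d x) ^ 2) * p x
        + deriv d x / (4 + (deriv d x) ^ 2) * deriv (fun y => htil y * p y) x
        + φ x
      = (3 / 2) * p x + ((4 + (deriv d x) ^ 2) / 4) * φ x
          - (ρ * deriv d x / (4 * Δt)) * (hu x - htu x) :=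
  bottom_pressure_elimination_general ρ Δt hρ d htil htu hu p φ x hcorr
end

section
/- Equivalence of the divergence constraint with the second elliptic equation: assume the horizontal momentum correction equation (hu − h̃u)/Δt = −(1/ρ)·(h̃·p)_x + (d_x/ρ)·[ 6/(4+d_x²)·p + d_x/(4+d_x²)·(h̃·p)_x + φ ] and the vertical momentum correction equation (hw − h̃w)/Δt = (1/ρ)·[ 6/(4+d_x²)·p + d_x/(4+d_x²)·(h̃·p)_x + φ ] hold at every x. Then the corrected divergence constraint 2·(hw) + (hu)·(2·d_x − h̃_x) + 2·h̃·d_t = −h̃·(hu)_x holds at x if and only if the second elliptic equation (hu)_x + ((3·d_x − 2·h̃_x)/(2·h̃))·(hu) + (3·Δt/(ρ·h̃))·p = −2·d_t − 2·(h̃w)/h̃ − d_x·(h̃u)/(2·h̃) − (Δt·(4+d_x²)/(2·ρ·h̃))·φ holds at x. -/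
/-!
Eliminating the common bracket `6/(4+d_x²)·p + d_x/(4+d_x²)·(h̃p)_x + φ` between the two momentum
corrections gives `4(hw − h̃w) + d_x(hu − h̃u) = (Δt/ρ)(6p + (4+d_x²)φ)`, in which the pressure
gradient `(h̃p)_x` has cancelled. With this relation the residual of the divergence constraint is
exactly `h̃` times the residual of the second elliptic equation, so, as `h̃ > 0`, they vanish together.
-/

section PointwiseAlgebra

variable {ρ Δt D Hx P Q φ u tu w tw ux dt H : ℝ}

theorem momentum_corrections_eliminate_pressure_gradient (hΔt : Δt ≠ 0)
    (hU : (u - tu) / Δt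
      = -(1 / ρ) * Q + (D / ρ) * (6 / (4 + D ^ 2) * P + D / (4 + D ^ 2) * Q + φ))
    (hW : (w - tw) / Δt = (1 / ρ) * (6 / (4 + D ^ 2) * P + D / (4 + D ^ 2) * Q + φ)) :
    4 * (w - tw) + D * (u - tu) = Δt / ρ * (6 * P + (4 + D ^ 2) * φ) := by
  have h4 : (4 : ℝ) + D ^ 2 ≠ 0 := by positivity
  rw [div_eq_iff hΔt] at hU hW
  rw [hU, hW]
  field_simp
  ring

theorem divergence_residual_eq_mul_elliptic_residual (hH : H ≠ 0)
    (hcomb : 4 * (w - tw) + D * (u - tu) = Δt / ρ * (6 * P + (4 + D ^ 2) * φ)) :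
    (2 * w + u * (2 * D - Hx) + 2 * H * dt) - (-H * ux)
      = H * ((ux + ((3 * D - 2 * Hx) / (2 * H)) * u + (3 * Δt / (ρ * H)) * P)
          - (-2 * dt - 2 * tw / H - D * tu / (2 * H) - (Δt * (4 + D ^ 2) / (2 * ρ * H)) * φ)) := by
  field_simp
  linear_combination hcomb

end PointwiseAlgebra

theorem divergence_constraint_iff_second_elliptic_general
    (ρ Δt : ℝ) (hΔt : 0 < Δt)
    (d htil htu htw hu hw p φ d_t : ℝ → ℝ)
    (hpos : ∀ x, 0 < htil x)
    (hcorr_u : ∀ x, (hu x - htu x) / Δt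
        = -(1 / ρ) * deriv (fun y => htil y * p y) x
          + (deriv d x / ρ) *
              (6 / (4 + (deriv d x) ^ 2) * p x
                + deriv d x / (4 + (deriv d x) ^ 2)
                    * deriv (fun y => htil y * p y) x
                + φ x))
    (hcorr_w : ∀ x, (hw x - htw x) / Δt
        = (1 / ρ) *
            (6 / (4 + (deriv d x) ^ 2) * p x
              + deriv d x / (4 + (deriv d x) ^ 2)
                  * deriv (fun y => htil y * p y) x
              + φ x)) :
    ∀ x : ℝ,
      (2 * hw x + hu x * (2 * deriv d x - deriv htil x)
          + 2 * htil x * d_t x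
        = -(htil x) * deriv hu x)
        ↔
      (deriv hu x
          + ((3 * deriv d x - 2 * deriv htil x) / (2 * htil x)) * hu x
          + (3 * Δt / (ρ * htil x)) * p x
        = -2 * d_t x - 2 * htw x / htil x
            - deriv d x * htu x / (2 * htil x)
            - (Δt * (4 + (deriv d x) ^ 2) / (2 * ρ * htil x)) * φ x) := by
  intro x
  have hcomb := momentum_corrections_eliminate_pressure_gradient hΔt.ne' (hcorr_u x) (hcorr_w x)
  rw [← sub_eq_zero, divergence_residual_eq_mul_elliptic_residual (hpos x).ne' hcomb,
    mul_eq_zero_iff_left (hpos x).ne', sub_eq_zero]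

/-- Equivalence of the corrected divergence constraint with the second elliptic
equation, assuming the horizontal and vertical momentum correction equations
hold at every point. -/
theorem divergence_constraint_iff_second_elliptic
    (ρ Δt : ℝ) (hρ : 0 < ρ) (hΔt : 0 < Δt)
    (d htil htu htw hu hw p φ d_t : ℝ → ℝ)
    (hd : Differentiable ℝ d)
    (hhtil : Differentiable ℝ htil)
    (hhtu : Differentiable ℝ htu)
    (hhtw : Differentiable ℝ htw)
    (hhu : Differentiable ℝ hu)
    (hhw : Differentiable ℝ hw)
    (hp : Differentiable ℝ p)
    (hφ : Differentiable ℝ φ)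
    (hpos : ∀ x, 0 < htil x)
    (hcorr_u : ∀ x, (hu x - htu x) / Δt
        = -(1 / ρ) * deriv (fun y => htil y * p y) x
          + (deriv d x / ρ) *
              (6 / (4 + (deriv d x) ^ 2) * p x
                + deriv d x / (4 + (deriv d x) ^ 2)
                    * deriv (fun y => htil y * p y) x
                + φ x))
    (hcorr_w : ∀ x, (hw x - htw x) / Δt
        = (1 / ρ) *
            (6 / (4 + (deriv d x) ^ 2) * p x
              + deriv d x / (4 + (deriv d x) ^ 2)
                  * deriv (fun y => htil y * p y) x
              + φ x)) :
    ∀ x : ℝ,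
      (2 * hw x + hu x * (2 * deriv d x - deriv htil x)
          + 2 * htil x * d_t x
        = -(htil x) * deriv hu x)
        ↔
      (deriv hu x
          + ((3 * deriv d x - 2 * deriv htil x) / (2 * htil x)) * hu x
          + (3 * Δt / (ρ * htil x)) * p x
        = -2 * d_t x - 2 * htw x / htil x
            - deriv d x * htu x / (2 * htil x)
            - (Δt * (4 + (deriv d x) ^ 2) / (2 * ρ * htil x)) * φ x) :=
  divergence_constraint_iff_second_elliptic_general ρ Δt hΔt d htil htu htw hu hw p φ d_t hpos
    hcorr_u hcorr_w
end

section
/- Flat-bottom reduction of the non-hydrostatic shallow water extension to the Serre equations: suppose the depth d is a positive constant, ρ, g > 0, h, u are three times continuously differentiable with h > 0, mass conservation ∂_t h + ∂_x(h·u) = 0 holds, and p = −(ρ/3)·h²·( ∂_x∂_t u + u·∂_x² u − (∂_x u)² ). Then the horizontal momentum equation ∂_t(h·u) + ∂_x( h·u² + (g/2)·h² ) = −(1/ρ)·∂_x(h·p) holds at every point if and only if the Serre momentum equation ∂_t u + u·∂_x u + g·∂_x h = (1/(3h))·∂_x[ h³·( ∂_x∂_t u + u·∂_x² u − (∂_x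 u)² ) ] holds at every point. -/
/-!
Expanding the derivatives and eliminating `∂_t h` by mass conservation turns the left side of the
conservative momentum equation into `h · (∂_t u + u ∂_x u + g ∂_x h)`, while substituting the
quadratic pressure law `p = -(ρ/3) h² Q` turns its right side into `(1/3) ∂_x (h³ Q)`, where
`Q = ∂_x∂_t u + u ∂_x² u − (∂_x u)²`. As `h > 0`, dividing by `h`
gives the Serre equation, and multiplying back gives the converse.
-/

section PartialDerivatives

variable {𝕜 E F G : Type*} [NontriviallyNormedField 𝕜]
  [NormedAddCommGroup E] [NormedSpace 𝕜 E] [NormedAddCommGroup F] [NormedSpace 𝕜 F]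
  [NormedAddCommGroup G] [NormedSpace 𝕜 G]

theorem Differentiable.differentiableAt_uncurry_left {f : E → F → G}
    (hf : Differentiable 𝕜 (fun q : E × F => f q.1 q.2)) (x : E) (t : F) :
    DifferentiableAt 𝕜 (fun y => f y t) x :=
  (hf.comp (differentiable_id.prodMk (differentiable_const t))).differentiableAt

theorem Differentiable.differentiableAt_uncurry_right {f : E → F → G}
    (hf : Differentiable 𝕜 (fun q : E × F => f q.1 q.2)) (x : E) (t : F) :
    DifferentiableAt 𝕜 (fun s => f x s) t :=
  (hf.comp ((differentiable_const x).prodMk differentiable_id)).differentiableAt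

end PartialDerivatives

theorem momentum_flux_eq_of_mass_conservation {h u : ℝ → ℝ → ℝ} {x t : ℝ} (g : ℝ)
    (hhx : DifferentiableAt ℝ (fun y => h y t) x) (hht : DifferentiableAt ℝ (fun s => h x s) t)
    (hux : DifferentiableAt ℝ (fun y => u y t) x) (hut : DifferentiableAt ℝ (fun s => u x s) t)
    (hmass : deriv (fun s => h x s) t + deriv (fun y => h y t * u y t) x = 0) :
    deriv (fun s => h x s * u x s) t
        + deriv (fun y => h y t * (u y t) ^ 2 + (g / 2) * (h y t) ^ 2) x
      = h x t * (deriv (fun s => u x s) t + u x t * deriv (fun y => u y t) x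
          + g * deriv (fun y => h y t) x) := by
  have time_deriv : deriv (fun s => h x s * u x s) t
      = deriv (fun s => h x s) t * u x t + h x t * deriv (fun s => u x s) t :=
    deriv_fun_mul hht hut
  have flux_deriv : deriv (fun y => h y t * (u y t) ^ 2 + (g / 2) * (h y t) ^ 2) x
      = deriv (fun y => h y t) x * (u x t) ^ 2
        + h x t * (2 * u x t * deriv (fun y => u y t) x)
        + (g / 2) * (2 * h x t * deriv (fun y => h y t) x) := by
    rw [((hhx.hasDerivAt.fun_mul (hux.hasDerivAt.fun_pow 2)).fun_add
      ((hhx.hasDerivAt.fun_pow 2).const_mul (g / 2))).deriv]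
    ring
  rw [deriv_fun_mul hhx hux] at hmass
  rw [time_deriv, flux_deriv]
  linear_combination u x t * hmass

theorem pressure_force_eq {H P Q : ℝ → ℝ} {ρ : ℝ} (hρ : ρ ≠ 0)
    (hP : ∀ y, P y = -(ρ / 3) * H y ^ 2 * Q y) (x : ℝ) :
    -(1 / ρ) * deriv (fun y => H y * P y) x = (1 / 3) * deriv (fun y => H y ^ 3 * Q y) x := by
  have hHP : (fun y => H y * P y) = fun y => -(ρ / 3) * (H y ^ 3 * Q y) := by
    funext y
    rw [hP]
    ring
  rw [hHP, deriv_const_mul_field]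
  field_simp

theorem flat_bottom_reduction_to_serre_general
    (ρ g : ℝ) (hρ : 0 < ρ)
    (h u p : ℝ → ℝ → ℝ)
    (hh : ContDiff ℝ 3 (fun q : ℝ × ℝ => h q.1 q.2))
    (hu : ContDiff ℝ 3 (fun q : ℝ × ℝ => u q.1 q.2))
    (hhpos : ∀ x t, 0 < h x t)
    (hmass : ∀ x t,
      deriv (fun s => h x s) t + deriv (fun y => h y t * u y t) x = 0)
    (hp : ∀ x t, p x t = -(ρ / 3) * (h x t) ^ 2 *
      (deriv (fun y => deriv (fun s => u y s) t) x
        + u x t * deriv (deriv (fun y => u y t)) x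
        - (deriv (fun y => u y t) x) ^ 2)) :
    (∀ x t : ℝ,
        deriv (fun s => h x s * u x s) t
            + deriv (fun y => h y t * (u y t) ^ 2 + (g / 2) * (h y t) ^ 2) x
          = -(1 / ρ) * deriv (fun y => h y t * p y t) x)
      ↔
    (∀ x t : ℝ,
        deriv (fun s => u x s) t + u x t * deriv (fun y => u y t) x
            + g * deriv (fun y => h y t) x
          = (1 / (3 * h x t)) *
              deriv (fun y =>
                (h y t) ^ 3 *
                  (deriv (fun z => deriv (fun s => u z s) t) y
                    + u y t * deriv (deriv (fun z => u z t)) y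
                    - (deriv (fun z => u z t) y) ^ 2)) x) := by
  have Hh := hh.differentiable (by norm_num)
  have Hu := hu.differentiable (by norm_num)
  refine forall₂_congr fun x t => ?_
  rw [momentum_flux_eq_of_mass_conservation g (Hh.differentiableAt_uncurry_left x t)
      (Hh.differentiableAt_uncurry_right x t) (Hu.differentiableAt_uncurry_left x t)
      (Hu.differentiableAt_uncurry_right x t) (hmass x t),
    pressure_force_eq hρ.ne' (fun y => hp y t) x]
  have hne : h x t ≠ 0 := (hhpos x t).ne'
  constructor <;> intro H <;> field_simp at H ⊢ <;> linear_combination H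

/-- Flat-bottom reduction of the non-hydrostatic shallow water extension to
the Serre equations: with constant depth `d > 0`, `ρ, g > 0`, `h, u` three
times continuously differentiable with `h > 0`, mass conservation, and
`p = −(ρ/3) h² (∂_x∂_t u + u ∂_x² u − (∂_x u)²)`, the horizontal momentum
equation `∂_t(h u) + ∂_x(h u² + (g/2) h²) = −(1/ρ) ∂_x(h p)` holds at every
point if and only if the Serre momentum equation
`∂_t u + u ∂_x u + g ∂_x h = (1/(3h)) ∂_x[ h³ (∂_x∂_t u + u ∂_x² u − (∂_x u)²) ]`
holds at every point. -/
theorem flat_bottom_reduction_to_serre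
    (ρ g d : ℝ) (hρ : 0 < ρ) (hg : 0 < g) (hd : 0 < d)
    (h u p : ℝ → ℝ → ℝ)
    (hh : ContDiff ℝ 3 (fun q : ℝ × ℝ => h q.1 q.2))
    (hu : ContDiff ℝ 3 (fun q : ℝ × ℝ => u q.1 q.2))
    (hhpos : ∀ x t, 0 < h x t)
    (hmass : ∀ x t,
      deriv (fun s => h x s) t + deriv (fun y => h y t * u y t) x = 0)
    (hp : ∀ x t, p x t = -(ρ / 3) * (h x t) ^ 2 *
      (deriv (fun y => deriv (fun s => u y s) t) x
        + u x t * deriv (deriv (fun y => u y t)) x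
        - (deriv (fun y => u y t) x) ^ 2)) :
    (∀ x t : ℝ,
        deriv (fun s => h x s * u x s) t
            + deriv (fun y => h y t * (u y t) ^ 2 + (g / 2) * (h y t) ^ 2) x
          = -(1 / ρ) * deriv (fun y => h y t * p y t) x)
      ↔
    (∀ x t : ℝ,
        deriv (fun s => u x s) t + u x t * deriv (fun y => u y t) x
            + g * deriv (fun y => h y t) x
          = (1 / (3 * h x t)) *
              deriv (fun y =>
                (h y t) ^ 3 *
                  (deriv (fun z => deriv (fun s => u z s) t) y
                    + u y t * deriv (deriv (fun z => u z t)) y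
                    - (deriv (fun z => u z t) y) ^ 2)) x) :=
  flat_bottom_reduction_to_serre_general ρ g hρ h u p hh hu hhpos hmass hp
end
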